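/- Let r ≥ 2 and let u, v be positive C¹ functions on an open set Ω ⊂ ℝ^N. Then pointwise one has (u^r − v^r)(|∇log u|^r − |∇log v|^r) − r v^r |∇log u|^{r−2}∇log u·(∇log v − ∇log u) − r u^r |∇log v|^{r−2}∇log v·(∇log u − ∇log v) ≥ (1/(2^{r−1}−1)) |u∇v − v∇u|^r (1/u^r + 1/v^r). -/

import Mathlib

/-!
Writing `w₁ = ∇u/u`, `w₂ = ∇v/v`, the right-hand side is `v^r D(w₁, w₂) + u^r D(w₂, w₁)`, where
`D(a, b) = |b|^r - |a|^r - r |a|^{r-2} a·(b - a)` is the Bregman divergence of `|·|^r`, and the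
left-hand side is `(u^r + v^r) |w₂ - w₁|^r / (2^{r-1} - 1)`. So it suffices to show
`D(a, b) ≥ c |b - a|^r` with `c = 1/(2^{r-1} - 1)`. Comparing `D(a, b)` with `D(a, (a + b)/2)`
through Clarkson's inequality shows that if `c` works then so does `2^{1-r}(c + 1)`; iterating
from `c = 0` (convexity of `|·|^r`) gives constants increasing to the fixed point `1/(2^{r-1} - 1)`.
-/

open Real Filter Topology

lemma rpow_add_mul_rpow_sub_one_mul_sub_le {p s t : ℝ} (hp : 1 ≤ p) (hs : 0 ≤ s) (ht : 0 ≤ t) :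
    s ^ p + p * s ^ (p - 1) * (t - s) ≤ t ^ p := by
  have hp0 : p ≠ 0 := by positivity
  have young := geom_mean_le_arith_mean2_weighted (by positivity : 0 ≤ p⁻¹)
    (by simpa using inv_le_one_of_one_le₀ hp : 0 ≤ 1 - p⁻¹) (rpow_nonneg ht p)
    (rpow_nonneg hs p) (add_sub_cancel p⁻¹ 1)
  rw [rpow_rpow_inv ht hp0, ← rpow_mul hs, mul_one_sub, mul_inv_cancel₀ hp0] at young
  have hsp : s ^ p = s ^ (p - 1) * s := by
    conv_lhs => rw [← sub_add_cancel p 1]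
    rw [rpow_add' hs (by simpa using hp0), rpow_one]
  have key : p * (t * s ^ (p - 1)) ≤ t ^ p + (p - 1) * s ^ p :=
    calc _ ≤ p * (p⁻¹ * t ^ p + (1 - p⁻¹) * s ^ p) := by gcongr
      _ = _ := by field_simp
  linear_combination key + p * hsp

lemma sq_rpow_div_two {x : ℝ} (hx : 0 ≤ x) (p : ℝ) : (x ^ 2) ^ (p / 2) = x ^ p := by
  rw [← rpow_natCast, ← rpow_mul hx]
  ring_nf

section InnerProductSpace

variable {E : Type*} [NormedAddCommGroup E] [InnerProductSpace ℝ E]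

lemma norm_half_add_rpow_add_norm_half_sub_rpow_le {p : ℝ} (hp : 2 ≤ p) (a b : E) :
    ‖(2:ℝ)⁻¹ • (a + b)‖ ^ p + ‖(2:ℝ)⁻¹ • (a - b)‖ ^ p ≤ (‖a‖ ^ p + ‖b‖ ^ p) / 2 := by
  set A := ‖(2:ℝ)⁻¹ • (a + b)‖
  set B := ‖(2:ℝ)⁻¹ • (a - b)‖
  have hq : 1 ≤ p / 2 := by linarith
  have parallelogram : A ^ 2 + B ^ 2 = 2⁻¹ * ‖a‖ ^ 2 + 2⁻¹ * ‖b‖ ^ 2 := by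
    simp only [A, B, norm_smul, norm_inv, Real.norm_two]
    linear_combination (4:ℝ)⁻¹ * parallelogram_law_with_norm ℝ a b
  calc A ^ p + B ^ p = (A ^ 2) ^ (p / 2) + (B ^ 2) ^ (p / 2) := by
        rw [sq_rpow_div_two (norm_nonneg _), sq_rpow_div_two (norm_nonneg _)]
    _ ≤ (A ^ 2 + B ^ 2) ^ (p / 2) := add_rpow_le_rpow_add (sq_nonneg _) (sq_nonneg _) hq
    _ ≤ 2⁻¹ * (‖a‖ ^ 2) ^ (p / 2) + 2⁻¹ * (‖b‖ ^ 2) ^ (p / 2) := by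
        rw [parallelogram]
        exact (convexOn_rpow hq).2 (sq_nonneg ‖a‖) (sq_nonneg ‖b‖) (by norm_num) (by norm_num)
          (by norm_num)
    _ = (‖a‖ ^ p + ‖b‖ ^ p) / 2 := by
        rw [sq_rpow_div_two (norm_nonneg _), sq_rpow_div_two (norm_nonneg _)]
        ring

lemma norm_half_smul_rpow (p : ℝ) (x : E) :
    ‖(2:ℝ)⁻¹ • x‖ ^ p = 2⁻¹ * 2 ^ (1 - p) * ‖x‖ ^ p := by
  rw [norm_smul, mul_rpow (by norm_num) (norm_nonneg _), norm_inv, Real.norm_two,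
    rpow_sub two_pos, rpow_one, inv_rpow zero_le_two]
  field_simp

noncomputable def normRpowBregman (p : ℝ) (a b : E) : ℝ :=
  ‖b‖ ^ p - ‖a‖ ^ p - p * ‖a‖ ^ (p - 2) * inner ℝ a (b - a)

lemma normRpowBregman_nonneg {p : ℝ} (hp : 1 < p) (a b : E) : 0 ≤ normRpowBregman p a b := by
  have hinner : inner ℝ a (b - a) ≤ ‖a‖ * (‖b‖ - ‖a‖) := by
    rw [inner_sub_right, real_inner_self_eq_norm_sq, mul_sub, ← sq]
    linarith [real_inner_le_norm a b]
  have hpow : ‖a‖ ^ (p - 2) * ‖a‖ = ‖a‖ ^ (p - 1) := by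
    rw [← rpow_add_one' (norm_nonneg a) (by linarith)]
    ring_nf
  have htangent := rpow_add_mul_rpow_sub_one_mul_sub_le hp.le (norm_nonneg a) (norm_nonneg b)
  have hcoeff : 0 ≤ p * ‖a‖ ^ (p - 2) := by positivity
  have := mul_le_mul_of_nonneg_left hinner hcoeff
  rw [normRpowBregman, sub_nonneg]
  calc p * ‖a‖ ^ (p - 2) * inner ℝ a (b - a)
      ≤ p * (‖a‖ ^ (p - 2) * ‖a‖) * (‖b‖ - ‖a‖) := by linarith
    _ ≤ ‖b‖ ^ p - ‖a‖ ^ p := by rw [hpow]; linarith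

lemma normRpowBregman_eq_two_mul_normRpowBregman_midpoint (p : ℝ) (a b : E) :
    normRpowBregman p a b = 2 * normRpowBregman p a ((2:ℝ)⁻¹ • (a + b))
      + (‖a‖ ^ p + ‖b‖ ^ p - 2 * ‖(2:ℝ)⁻¹ • (a + b)‖ ^ p) := by
  have : (2:ℝ)⁻¹ • (a + b) - a = (2:ℝ)⁻¹ • (b - a) := by module
  simp only [normRpowBregman, this, inner_smul_right]
  ring

lemma mul_norm_sub_rpow_le_normRpowBregman_of_forall {p c : ℝ} (hp : 2 ≤ p) {a : E}
    (h : ∀ b, c * ‖b - a‖ ^ p ≤ normRpowBregman p a b) (b : E) :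
    2 ^ (1 - p) * (c + 1) * ‖b - a‖ ^ p ≤ normRpowBregman p a b := by
  have hmid := h ((2:ℝ)⁻¹ • (a + b))
  have hclarkson := norm_half_add_rpow_add_norm_half_sub_rpow_le hp a b
  have : (2:ℝ)⁻¹ • (a + b) - a = (2:ℝ)⁻¹ • (b - a) := by module
  rw [this, norm_half_smul_rpow] at hmid
  rw [norm_half_smul_rpow p (a - b), norm_sub_rev a b] at hclarkson
  rw [normRpowBregman_eq_two_mul_normRpowBregman_midpoint]
  linear_combination 2 * hmid + 2 * hclarkson

lemma normRpowBregman_ge_iterate {p : ℝ} (hp : 2 ≤ p) (n : ℕ) (a b : E) :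
    (1 - (2 ^ (1 - p)) ^ n) / (2 ^ (p - 1) - 1) * ‖b - a‖ ^ p ≤ normRpowBregman p a b := by
  induction n generalizing b with
  | zero => simpa using normRpowBregman_nonneg (by linarith) a b
  | succ n ih =>
    convert mul_norm_sub_rpow_le_normRpowBregman_of_forall hp ih b using 2
    have hK : (2:ℝ) ^ (p - 1) - 1 ≠ 0 := (sub_pos.2 (one_lt_rpow one_lt_two (by linarith))).ne'
    have hinv : (2:ℝ) ^ (1 - p) * 2 ^ (p - 1) = 1 := by
      rw [← rpow_add two_pos]; norm_num
    field_simp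
    linear_combination -hinv

lemma one_div_mul_norm_sub_rpow_le_normRpowBregman {p : ℝ} (hp : 2 ≤ p) (a b : E) :
    1 / (2 ^ (p - 1) - 1) * ‖b - a‖ ^ p ≤ normRpowBregman p a b := by
  have hq : (2:ℝ) ^ (1 - p) < 1 := rpow_lt_one_of_one_lt_of_neg one_lt_two (by linarith)
  have hlim : Tendsto (fun n : ℕ ↦ (1 - (2 ^ (1 - p)) ^ n) / (2 ^ (p - 1) - 1) * ‖b - a‖ ^ p)
      atTop (𝓝 ((1 - 0) / (2 ^ (p - 1) - 1) * ‖b - a‖ ^ p)) :=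
    (((tendsto_pow_atTop_nhds_zero_of_lt_one (by positivity) hq).const_sub 1).div_const _).mul_const
      _
  simpa using le_of_tendsto' hlim (normRpowBregman_ge_iterate hp · a b)

lemma rpow_log_gradient_inequality {p s t : ℝ} (hp : 2 ≤ p) (hs : 0 < s) (ht : 0 < t) (g h : E) :
    (1 / (2 ^ (p - 1) - 1)) * ‖s • h - t • g‖ ^ p * (1 / s ^ p + 1 / t ^ p) ≤
      (s ^ p - t ^ p) * (‖s⁻¹ • g‖ ^ p - ‖t⁻¹ • h‖ ^ p)
        - p * t ^ p * ‖s⁻¹ • g‖ ^ (p - 2) * (inner ℝ (s⁻¹ • g) (t⁻¹ • h - s⁻¹ • g) : ℝ)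
        - p * s ^ p * ‖t⁻¹ • h‖ ^ (p - 2) * (inner ℝ (t⁻¹ • h) (s⁻¹ • g - t⁻¹ • h) : ℝ) := by
  set w₁ := s⁻¹ • g
  set w₂ := t⁻¹ • h
  have hdiff : s • h - t • g = (s * t) • (w₂ - w₁) := by
    simp only [w₁, w₂, smul_sub, smul_smul]
    field_simp
  have hlhs :
      ‖s • h - t • g‖ ^ p * (1 / s ^ p + 1 / t ^ p) = (t ^ p + s ^ p) * ‖w₂ - w₁‖ ^ p := by
    rw [hdiff, norm_smul, norm_of_nonneg (by positivity), mul_rpow (by positivity) (norm_nonneg _),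
      mul_rpow hs.le ht.le]
    field_simp
  have hrhs : (s ^ p - t ^ p) * (‖w₁‖ ^ p - ‖w₂‖ ^ p)
        - p * t ^ p * ‖w₁‖ ^ (p - 2) * (inner ℝ w₁ (w₂ - w₁) : ℝ)
        - p * s ^ p * ‖w₂‖ ^ (p - 2) * (inner ℝ w₂ (w₁ - w₂) : ℝ) =
      t ^ p * normRpowBregman p w₁ w₂ + s ^ p * normRpowBregman p w₂ w₁ := by
    unfold normRpowBregman
    ring
  have h₁₂ := one_div_mul_norm_sub_rpow_le_normRpowBregman hp w₁ w₂
  have h₂₁ := one_div_mul_norm_sub_rpow_le_normRpowBregman hp w₂ w₁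
  rw [norm_sub_rev] at h₂₁
  have := add_le_add (mul_le_mul_of_nonneg_left h₁₂ (rpow_nonneg ht.le p))
    (mul_le_mul_of_nonneg_left h₂₁ (rpow_nonneg hs.le p))
  rw [mul_assoc, hlhs, hrhs]
  linarith

end InnerProductSpace

theorem stmt_12_general (N : ℕ) (r : ℝ) (hr : 2 ≤ r)
    (Ω : Set (EuclideanSpace ℝ (Fin N)))
    (u v : EuclideanSpace ℝ (Fin N) → ℝ)
    (hupos : ∀ x ∈ Ω, 0 < u x) (hvpos : ∀ x ∈ Ω, 0 < v x)
    (x : EuclideanSpace ℝ (Fin N)) (hx : x ∈ Ω) :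
    (1 / (2 ^ (r - 1) - 1)) * ‖u x • gradient v x - v x • gradient u x‖ ^ r
        * (1 / u x ^ r + 1 / v x ^ r) ≤
      (u x ^ r - v x ^ r) *
          (‖(u x)⁻¹ • gradient u x‖ ^ r - ‖(v x)⁻¹ • gradient v x‖ ^ r)
        - r * v x ^ r * ‖(u x)⁻¹ • gradient u x‖ ^ (r - 2) *
            (inner ℝ ((u x)⁻¹ • gradient u x)
              ((v x)⁻¹ • gradient v x - (u x)⁻¹ • gradient u x) : ℝ)
        - r * u x ^ r * ‖(v x)⁻¹ • gradient v x‖ ^ (r - 2) *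
            (inner ℝ ((v x)⁻¹ • gradient v x)
              ((u x)⁻¹ • gradient u x - (v x)⁻¹ • gradient v x) : ℝ) :=
  rpow_log_gradient_inequality hr (hupos x hx) (hvpos x hx) _ _

/-- Key pointwise inequality in the weak comparison principle (Theorem WCP): for
`r ≥ 2` and positive `C¹` functions `u, v` on an open set `Ω`, at each `x ∈ Ω`
(writing `∇log u = ∇u/u`):
`(u^r - v^r)(|∇log u|^r - |∇log v|^r) - r v^r |∇log u|^{r-2}∇log u·(∇log v - ∇log u)
 - r u^r |∇log v|^{r-2}∇log v·(∇log u - ∇log v)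
 ≥ (1/(2^{r-1}-1)) |u∇v - v∇u|^r (1/u^r + 1/v^r)`. -/
theorem stmt_12 (N : ℕ) (r : ℝ) (hr : 2 ≤ r)
    (Ω : Set (EuclideanSpace ℝ (Fin N))) (hΩ : IsOpen Ω)
    (u v : EuclideanSpace ℝ (Fin N) → ℝ)
    (hu : ContDiffOn ℝ 1 u Ω) (hv : ContDiffOn ℝ 1 v Ω)
    (hupos : ∀ x ∈ Ω, 0 < u x) (hvpos : ∀ x ∈ Ω, 0 < v x)
    (x : EuclideanSpace ℝ (Fin N)) (hx : x ∈ Ω) :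
    (1 / (2 ^ (r - 1) - 1)) * ‖u x • gradient v x - v x • gradient u x‖ ^ r
        * (1 / u x ^ r + 1 / v x ^ r) ≤
      (u x ^ r - v x ^ r) *
          (‖(u x)⁻¹ • gradient u x‖ ^ r - ‖(v x)⁻¹ • gradient v x‖ ^ r)
        - r * v x ^ r * ‖(u x)⁻¹ • gradient u x‖ ^ (r - 2) *
            (inner ℝ ((u x)⁻¹ • gradient u x)
              ((v x)⁻¹ • gradient v x - (u x)⁻¹ • gradient u x) : ℝ)
        - r * u x ^ r * ‖(v x)⁻¹ • gradient v x‖ ^ (r - 2) *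
            (inner ℝ ((v x)⁻¹ • gradient v x)
              ((u x)⁻¹ • gradient u x - (v x)⁻¹ • gradient v x) : ℝ) :=
  stmt_12_general N r hr Ω u v hupos hvpos x hx
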